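/- arXiv:2604.02601 — 2 statements merged into one kernel-verified Lean document; each statement's English description precedes it below -/
import Mathlib

section
/- For all z ≠ 0, the function V(z) = (1 - u(z))² + (1/2)u(z)², where u(z) = (sinh z - z)/(z(cosh z - 1)), satisfies 1/2 ≤ V(z) ≤ 1. -/
/-!
Write `u(z) = (sinh z - z) / (z (cosh z - 1))`. Since `u` is even it suffices to take `z > 0`,
where `sinh z > z` gives `u ≥ 0`, and `u ≤ 1/3` is the inequality `3 sinh z ≤ z cosh z + 2z`.
The latter follows by differentiating three times: the successive derivatives of
`z cosh z + 2z - 3 sinh z` are `z sinh z - 2 cosh z + 2`, `z cosh z - sinh z` and `z sinh z`,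
all vanishing at `0`, and the last one is nonnegative for `z ≥ 0`.
Finally `q(u) = (1 - u)² + u²/2` is decreasing on `[0, 1/3]`, from `q 0 = 1` to `q (1/3) = 1/2`.
-/

open Real Set

lemma nonneg_of_hasDerivAt_of_map_zero {f f' : ℝ → ℝ} (hf : ∀ x, HasDerivAt f (f' x) x)
    (hf₀ : f 0 = 0) (hf' : ∀ x, 0 < x → 0 ≤ f' x) {x : ℝ} (hx : 0 ≤ x) : 0 ≤ f x := by
  have hmono : MonotoneOn f (Ici 0) :=
    monotoneOn_of_hasDerivWithinAt_nonneg (convex_Ici 0)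
      (fun y _ ↦ (hf y).continuousAt.continuousWithinAt) (fun y _ ↦ (hf y).hasDerivWithinAt)
      (fun y hy ↦ hf' y (by rwa [interior_Ici] at hy))
  simpa [hf₀] using hmono self_mem_Ici hx hx

lemma sinh_le_mul_cosh {x : ℝ} (hx : 0 ≤ x) : sinh x ≤ x * cosh x := by
  have hderiv (y : ℝ) : HasDerivAt (fun y ↦ y * cosh y - sinh y) (y * sinh y) y :=
    ((hasDerivAt_id' y).mul (hasDerivAt_cosh y)).sub (hasDerivAt_sinh y) |>.congr_deriv (by ring)
  have := nonneg_of_hasDerivAt_of_map_zero hderiv (by simp)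
    (fun y hy ↦ mul_nonneg hy.le (sinh_nonneg_iff.mpr hy.le)) hx
  linarith

lemma two_mul_cosh_le_mul_sinh_add_two {x : ℝ} (hx : 0 ≤ x) :
    2 * cosh x ≤ x * sinh x + 2 := by
  have hderiv (y : ℝ) :
      HasDerivAt (fun y ↦ y * sinh y - 2 * cosh y + 2) (y * cosh y - sinh y) y :=
    (((hasDerivAt_id' y).mul (hasDerivAt_sinh y)).sub
      ((hasDerivAt_cosh y).const_mul 2)).add_const 2 |>.congr_deriv (by ring)
  have := nonneg_of_hasDerivAt_of_map_zero hderiv (by simp)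
    (fun y hy ↦ sub_nonneg.mpr (sinh_le_mul_cosh hy.le)) hx
  linarith

lemma three_mul_sinh_le_mul_cosh_add_two_mul {x : ℝ} (hx : 0 ≤ x) :
    3 * sinh x ≤ x * cosh x + 2 * x := by
  have hderiv (y : ℝ) :
      HasDerivAt (fun y ↦ y * cosh y + 2 * y - 3 * sinh y) (y * sinh y - 2 * cosh y + 2) y :=
    (((hasDerivAt_id' y).mul (hasDerivAt_cosh y)).add ((hasDerivAt_id' y).const_mul 2)).sub
      ((hasDerivAt_sinh y).const_mul 3) |>.congr_deriv (by ring)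
  have := nonneg_of_hasDerivAt_of_map_zero hderiv (by simp)
    (fun y hy ↦ by linarith [two_mul_cosh_le_mul_sinh_add_two hy.le]) hx
  linarith

lemma sinh_sub_self_div_neg (z : ℝ) :
    (sinh (-z) - -z) / (-z * (cosh (-z) - 1)) = (sinh z - z) / (z * (cosh z - 1)) := by
  rw [sinh_neg, cosh_neg, ← neg_div_neg_eq]
  ring_nf

lemma sinh_sub_self_div_mem_Icc_of_pos {z : ℝ} (hz : 0 < z) :
    (sinh z - z) / (z * (cosh z - 1)) ∈ Icc 0 (1 / 3) := by
  have hden : 0 < z * (cosh z - 1) := mul_pos hz (sub_pos.mpr (one_lt_cosh.mpr hz.ne'))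
  refine ⟨div_nonneg (sub_nonneg.mpr (self_lt_sinh_iff.mpr hz).le) hden.le, ?_⟩
  rw [div_le_iff₀ hden]
  linarith [three_mul_sinh_le_mul_cosh_add_two_mul hz.le]

lemma sinh_sub_self_div_mem_Icc {z : ℝ} (hz : z ≠ 0) :
    (sinh z - z) / (z * (cosh z - 1)) ∈ Icc 0 (1 / 3) := by
  rcases hz.lt_or_gt with hneg | hpos
  · rw [← sinh_sub_self_div_neg]
    exact sinh_sub_self_div_mem_Icc_of_pos (neg_pos.mpr hneg)
  · exact sinh_sub_self_div_mem_Icc_of_pos hpos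

lemma one_sub_sq_add_half_sq_mem_Icc {u : ℝ} (hu : u ∈ Icc 0 (1 / 3)) :
    (1 - u) ^ 2 + (1 / 2) * u ^ 2 ∈ Icc (1 / 2) 1 := by
  obtain ⟨hu₀, hu₁⟩ := hu
  constructor <;> nlinarith

theorem V_bounds (z : ℝ) (hz : z ≠ 0) :
    1 / 2 ≤ (1 - (Real.sinh z - z) / (z * (Real.cosh z - 1))) ^ 2
        + (1 / 2) * ((Real.sinh z - z) / (z * (Real.cosh z - 1))) ^ 2 ∧
    (1 - (Real.sinh z - z) / (z * (Real.cosh z - 1))) ^ 2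
        + (1 / 2) * ((Real.sinh z - z) / (z * (Real.cosh z - 1))) ^ 2 ≤ 1 :=
  one_sub_sq_add_half_sq_mem_Icc (sinh_sub_self_div_mem_Icc hz)
end

section
/- Suppose weights ψ_{-m},…,ψ_m and ψ'_1,…,ψ'_m satisfy Σ_{k=-m}^m ψ_k = 1 and Σ_{k=1}^m 2kh ψ'_k = -1, where ψ'_{-k} = -ψ'_k and ψ'_0 = 0. Then for noise-free data x_k = x₀e^{λkh} (λ ≠ 0, x₀ ≠ 0), the weak-form estimator θ = -(Σ_{k=-m}^m ψ'_k x_k)/(Σ_{k=-m}^m ψ_k x_k) satisfies θ = λ - R with R = 2x₀·Σ_{k=1}^m (ψ'_k e_λ(kh) + ψ_k e'_λ(kh)) / (x₀ + (2x₀/λ)Σ_{k=1}^m ψ_k e'_λ(kh)), provided the denominator is nonzero. -/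
/-!
Pairing the nodes `k` and `-k` turns the exponential data into `x₀ cosh (λkh)` against the even
weights `ψ` and `x₀ sinh (λkh)` against the odd weights `ψ'`. The two normalisations then give
`Σ ψ'_k x_k = 2x₀ Σ ψ'_k e_λ(kh) - λ x₀` and `Σ ψ_k x_k = x₀ + (2x₀/λ) Σ ψ_k e'_λ(kh)`,
and the claimed formula for `θ = -(Σ ψ'_k x_k) / (Σ ψ_k x_k)` is a rearrangement of this quotient.
-/

open Finset Real

theorem sum_Icc_neg_eq_add_sum_Icc_one {M : Type*} [AddCommMonoid M] (m : ℕ) (f : ℤ → M) :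
    ∑ k ∈ Icc (-(m : ℤ)) m, f k = f 0 + ∑ k ∈ Icc (1 : ℤ) m, (f k + f (-k)) := by
  induction m with
  | zero => simp
  | succ n ih =>
    push_cast
    rw [← insert_Icc_right_eq_Icc_add_one (by omega), ← insert_Icc_add_one_left_eq_Icc (by omega),
      ← insert_Icc_right_eq_Icc_add_one (by omega), sum_insert (by simp; omega), sum_insert (by simp),
      sum_insert (by simp), neg_add, neg_add_cancel_right, ih]
    abel

theorem sum_Icc_neg_of_even {M : Type*} [AddCommMonoid M] (m : ℕ) {f : ℤ → M}
    (hf : ∀ k, f (-k) = f k) :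
    ∑ k ∈ Icc (-(m : ℤ)) m, f k = f 0 + ∑ k ∈ Icc (1 : ℤ) m, 2 • f k := by
  simp_rw [sum_Icc_neg_eq_add_sum_Icc_one, hf, two_nsmul]

theorem sum_Icc_neg_odd_mul_exp (m : ℕ) (x₀ : ℝ) {t g : ℤ → ℝ} (ht : ∀ k, t (-k) = -t k)
    (hg : ∀ k, g (-k) = -g k) (hg0 : g 0 = 0) :
    ∑ k ∈ Icc (-(m : ℤ)) m, g k * (x₀ * exp (t k))
      = 2 * x₀ * ∑ k ∈ Icc (1 : ℤ) m, g k * sinh (t k) := by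
  rw [sum_Icc_neg_eq_add_sum_Icc_one, mul_sum, hg0, zero_mul, zero_add]
  refine sum_congr rfl fun k _ => ?_
  rw [hg, ht, sinh_eq]
  ring

theorem sum_Icc_neg_even_mul_exp (m : ℕ) (x₀ : ℝ) {t g : ℤ → ℝ} (ht : ∀ k, t (-k) = -t k)
    (hg : ∀ k, g (-k) = g k) (hg_sum : ∑ k ∈ Icc (-(m : ℤ)) m, g k = 1) :
    ∑ k ∈ Icc (-(m : ℤ)) m, g k * (x₀ * exp (t k))
      = x₀ + 2 * x₀ * ∑ k ∈ Icc (1 : ℤ) m, g k * (cosh (t k) - 1) := by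
  have ht0 : t 0 = 0 := by linarith [neg_zero (G := ℤ) ▸ ht 0]
  have hg0 : g 0 = 1 - ∑ k ∈ Icc (1 : ℤ) m, 2 * g k := by
    rw [← hg_sum, sum_Icc_neg_of_even m hg]
    simp only [nsmul_eq_mul, Nat.cast_ofNat, add_sub_cancel_right]
  have hpair : ∀ k, g k * (x₀ * exp (t k)) + g (-k) * (x₀ * exp (t (-k)))
      = 2 * x₀ * (g k * (cosh (t k) - 1)) + 2 * g k * x₀ := fun k => by
    rw [hg, ht, cosh_eq]
    ring
  rw [sum_Icc_neg_eq_add_sum_Icc_one, ht0, exp_zero, hg0, sum_congr rfl fun k _ => hpair k,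
    sum_add_distrib, mul_sum, ← sum_mul]
  ring

theorem weak_form_estimator_bias_general (x₀ lam h : ℝ) (hlam : lam ≠ 0)
    (m : ℕ) (ψ ψ' : ℤ → ℝ)
    (hsymm : ∀ k : ℤ, ψ (-k) = ψ k)
    (hanti : ∀ k : ℤ, ψ' (-k) = -ψ' k)
    (hψ'0 : ψ' 0 = 0)
    (hnorm : ∑ k ∈ Finset.Icc (-(m : ℤ)) (m : ℤ), ψ k = 1)
    (hnorm' : ∑ k ∈ Finset.Icc (1 : ℤ) (m : ℤ), 2 * (k : ℝ) * h * ψ' k = -1)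
    (x : ℤ → ℝ) (hx : ∀ k : ℤ, x k = x₀ * Real.exp (lam * k * h))
    (hRden : x₀ + (2 * x₀ / lam) * ∑ k ∈ Finset.Icc (1 : ℤ) (m : ℤ),
        ψ k * (lam * (Real.cosh (lam * ((k : ℝ) * h)) - 1)) ≠ 0) :
    -(∑ k ∈ Finset.Icc (-(m : ℤ)) (m : ℤ), ψ' k * x k)
        / (∑ k ∈ Finset.Icc (-(m : ℤ)) (m : ℤ), ψ k * x k)
      = lam -
        (2 * x₀ * ∑ k ∈ Finset.Icc (1 : ℤ) (m : ℤ),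
            (ψ' k * (Real.sinh (lam * ((k : ℝ) * h)) - lam * ((k : ℝ) * h))
              + ψ k * (lam * (Real.cosh (lam * ((k : ℝ) * h)) - 1))))
          / (x₀ + (2 * x₀ / lam) * ∑ k ∈ Finset.Icc (1 : ℤ) (m : ℤ),
              ψ k * (lam * (Real.cosh (lam * ((k : ℝ) * h)) - 1))) := by
  have ht : ∀ k : ℤ, lam * (((-k : ℤ) : ℝ) * h) = -(lam * ((k : ℝ) * h)) := fun k => by
    push_cast; ring
  simp_rw [hx, mul_assoc lam]
  rw [sum_Icc_neg_odd_mul_exp m x₀ ht hanti hψ'0, sum_Icc_neg_even_mul_exp m x₀ ht hsymm hnorm,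
    sum_add_distrib]
  have hmoment : ∑ k ∈ Icc (1 : ℤ) m, ψ' k * (lam * ((k : ℝ) * h)) = -lam / 2 := by
    rw [show -lam / 2 = lam / 2 * (-1) by ring, ← hnorm', mul_sum]
    exact sum_congr rfl fun k _ => by ring
  have hcosh : 2 * x₀ * ∑ k ∈ Icc (1 : ℤ) m, ψ k * (cosh (lam * ((k : ℝ) * h)) - 1)
      = 2 * x₀ / lam * ∑ k ∈ Icc (1 : ℤ) m, ψ k * (lam * (cosh (lam * ((k : ℝ) * h)) - 1)) := by
    rw [mul_sum, mul_sum]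
    exact sum_congr rfl fun k _ => by field_simp
  rw [hcosh]
  simp only [mul_sub (ψ' _), sum_sub_distrib, hmoment]
  set S := ∑ k ∈ Icc (1 : ℤ) m, ψ' k * sinh (lam * ((k : ℝ) * h))
  set C := ∑ k ∈ Icc (1 : ℤ) m, ψ k * (lam * (cosh (lam * ((k : ℝ) * h)) - 1))
  rw [eq_sub_iff_add_eq, ← add_div, div_eq_iff hRden]
  field_simp
  ring

theorem weak_form_estimator_bias (x₀ lam h : ℝ) (hx₀ : x₀ ≠ 0) (hlam : lam ≠ 0) (hh : 0 < h)
    (m : ℕ) (hm : 1 ≤ m) (ψ ψ' : ℤ → ℝ)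
    (hsymm : ∀ k : ℤ, ψ (-k) = ψ k)
    (hanti : ∀ k : ℤ, ψ' (-k) = -ψ' k)
    (hψ'0 : ψ' 0 = 0)
    (hnorm : ∑ k ∈ Finset.Icc (-(m : ℤ)) (m : ℤ), ψ k = 1)
    (hnorm' : ∑ k ∈ Finset.Icc (1 : ℤ) (m : ℤ), 2 * (k : ℝ) * h * ψ' k = -1)
    (x : ℤ → ℝ) (hx : ∀ k : ℤ, x k = x₀ * Real.exp (lam * k * h))
    (hden : ∑ k ∈ Finset.Icc (-(m : ℤ)) (m : ℤ), ψ k * x k ≠ 0)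
    (hRden : x₀ + (2 * x₀ / lam) * ∑ k ∈ Finset.Icc (1 : ℤ) (m : ℤ),
        ψ k * (lam * (Real.cosh (lam * ((k : ℝ) * h)) - 1)) ≠ 0) :
    -(∑ k ∈ Finset.Icc (-(m : ℤ)) (m : ℤ), ψ' k * x k)
        / (∑ k ∈ Finset.Icc (-(m : ℤ)) (m : ℤ), ψ k * x k)
      = lam -
        (2 * x₀ * ∑ k ∈ Finset.Icc (1 : ℤ) (m : ℤ),
            (ψ' k * (Real.sinh (lam * ((k : ℝ) * h)) - lam * ((k : ℝ) * h))
              + ψ k * (lam * (Real.cosh (lam * ((k : ℝ) * h)) - 1))))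
          / (x₀ + (2 * x₀ / lam) * ∑ k ∈ Finset.Icc (1 : ℤ) (m : ℤ),
              ψ k * (lam * (Real.cosh (lam * ((k : ℝ) * h)) - 1))) :=
  weak_form_estimator_bias_general x₀ lam h hlam m ψ ψ' hsymm hanti hψ'0 hnorm hnorm' x hx hRden
end
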